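/- arXiv:1501.00014 — 2 statements merged into one kernel-verified Lean document; each statement's English description precedes it below -/
import Mathlib

section
/- Let x be a positive real vector with integer sum M whose fractional parts are nonincreasing, I = M - ∑ floor(x_i), and m* the ORIC solution (round up first I components, down the rest). Then the multiset of rounding errors {|x_i - m*_i|} is componentwise dominated: for every feasible m (nonnegative integers, sum M, m_i ∈ {floor(x_i), ceil(x_i)}) and every convex nondecreasing function φ : ℝ_{≥0} → ℝ, ∑_i φ(|x_i - m*_i|) ≤ ∑_i φ(|x_i - m_i|). -/
/-!
Write `e i = fract (x i)`. A feasible rounding `m` rounds up exactly on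
`S = {i | m i ≠ ⌊x i⌋}`; there `e i > 0` and the error is `1 - e i`, elsewhere it is `e i`. Hence
`∑ φ |x i - m i| = ∑ φ (e i) + ∑_{i ∈ S} D i` with `D i = φ (1 - e i) - φ (e i)`, and summing
`m i - ⌊x i⌋` gives `#S = I`. As `e` is nonincreasing and `φ` nondecreasing, `D` is nondecreasing,
so among all `I`-element sets `S` the sum `∑_{i ∈ S} D i` is smallest on the first `I` indices,
which is exactly the set that ORIC rounds up.
-/

open Finset

theorem Finset.sum_le_sum_of_card_eq_of_forall_sdiff_le {ι β : Type*} [DecidableEq ι]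
    [AddCommMonoid β] [LinearOrder β] [IsOrderedAddMonoid β] {S T : Finset ι} {D : ι → β}
    (hcard : #T = #S) (hle : ∀ a ∈ T \ S, ∀ b ∈ S \ T, D a ≤ D b) :
    ∑ i ∈ T, D i ≤ ∑ i ∈ S, D i := by
  have hsdiff : #(T \ S) = #(S \ T) := card_sdiff_comm hcard
  have key : ∑ i ∈ T \ S, D i ≤ ∑ i ∈ S \ T, D i := by
    rcases (S \ T).eq_empty_or_nonempty with hempty | hne
    · rw [hempty, card_empty, card_eq_zero] at hsdiff
      simp [hempty, hsdiff]
    · obtain ⟨b, hb, hmin⟩ := exists_min_image (S \ T) D hne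
      calc ∑ i ∈ T \ S, D i ≤ #(T \ S) • D b := sum_le_card_nsmul _ _ _ fun a ha => hle a ha b hb
        _ = #(S \ T) • D b := by rw [hsdiff]
        _ ≤ ∑ i ∈ S \ T, D i := card_nsmul_le_sum _ _ _ hmin
  rw [← sum_inter_add_sum_sdiff T S, ← sum_inter_add_sum_sdiff S T, inter_comm]
  exact add_le_add_right key _

theorem Monotone.sum_filter_val_lt_card_le {N : ℕ} {β : Type*} [AddCommMonoid β] [LinearOrder β]
    [IsOrderedAddMonoid β] {D : Fin N → β} (hD : Monotone D) (S : Finset (Fin N)) :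
    ∑ i ∈ ({i | (i : ℕ) < #S} : Finset (Fin N)), D i ≤ ∑ i ∈ S, D i := by
  have hcard : #S ≤ N := (card_le_univ S).trans_eq (Fintype.card_fin N)
  refine sum_le_sum_of_card_eq_of_forall_sdiff_le
    (by rw [Fin.card_filter_val_lt, min_eq_right hcard]) fun a ha b hb => hD ?_
  simp only [mem_sdiff, mem_filter, mem_univ, true_and] at ha hb
  exact Fin.le_def.mpr (by omega)

theorem Antitone.lt_apply_of_lt_card {N : ℕ} {β : Type*} [LinearOrder β] {f : Fin N → β}
    (hf : Antitone f) {U : Finset (Fin N)} {b : β} (hU : ∀ j ∈ U, b < f j) {i : Fin N}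
    (hi : (i : ℕ) < #U) : b < f i := by
  by_contra! hfi
  have hsub : U ⊆ Iio i := fun j hj => mem_Iio.mpr <| lt_of_not_ge fun hij =>
    (hU j hj).not_ge ((hf hij).trans hfi)
  have := card_le_card hsub
  rw [Fin.card_Iio] at this
  omega

theorem Antitone.monotone_comp_one_sub_sub_comp {ι R β : Type*} [Preorder ι] [Ring R]
    [PartialOrder R] [IsOrderedRing R] [AddCommGroup β] [PartialOrder β] [IsOrderedAddMonoid β]
    {φ : R → β} (hφ : MonotoneOn φ (Set.Ici 0)) {f : ι → R} (hf : Antitone f)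
    (h0 : ∀ i, 0 ≤ f i) (h1 : ∀ i, f i ≤ 1) :
    Monotone fun i => φ (1 - f i) - φ (f i) := fun i j hij =>
  sub_le_sub (hφ (sub_nonneg.mpr (h1 i)) (sub_nonneg.mpr (h1 j)) (sub_le_sub_left (hf hij) 1))
    (hφ (h0 j) (h0 i) (hf hij))

section Rounding

variable {R : Type*} [Field R] [LinearOrder R] [IsStrictOrderedRing R] [FloorRing R]

theorem Int.fract_ne_zero_of_ne_floor {x : R} {k : ℤ} (hk : k = ⌊x⌋ ∨ k = ⌈x⌉)
    (hne : k ≠ ⌊x⌋) : Int.fract x ≠ 0 := by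
  rw [Ne, Int.fract_eq_zero_iff]
  rintro ⟨n, rfl⟩
  simp_all

theorem Int.eq_floor_add_one_of_ne_floor {x : R} {k : ℤ} (hk : k = ⌊x⌋ ∨ k = ⌈x⌉)
    (hne : k ≠ ⌊x⌋) : k = ⌊x⌋ + 1 := by
  rw [hk.resolve_left hne, Int.ceil_eq_floor_add_one_iff_notMem, ← Int.fract_ne_zero_iff]
  exact Int.fract_ne_zero_of_ne_floor hk hne

theorem Int.abs_sub_of_ne_floor {x : R} {k : ℤ} (hk : k = ⌊x⌋ ∨ k = ⌈x⌉)
    (hne : k ≠ ⌊x⌋) : |x - k| = 1 - Int.fract x := by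
  rw [hk.resolve_left hne, abs_sub_comm,
    Int.ceil_sub_self_eq (Int.fract_ne_zero_of_ne_floor hk hne),
    abs_of_nonneg (sub_nonneg.mpr (Int.fract_lt_one x).le)]

def roundedUp {ι : Type*} [Fintype ι] (x : ι → R) (m : ι → ℤ) : Finset ι :=
  {i | m i ≠ ⌊x i⌋}

section Feasible

variable {ι : Type*} [Fintype ι] {x : ι → R} {m : ι → ℤ}

theorem fract_pos_of_mem_roundedUp (hm : ∀ i, m i = ⌊x i⌋ ∨ m i = ⌈x i⌉) {i : ι}
    (hi : i ∈ roundedUp x m) : 0 < Int.fract (x i) :=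
  (Int.fract_nonneg _).lt_of_ne' <| Int.fract_ne_zero_of_ne_floor (hm i) (mem_filter.mp hi).2

theorem card_roundedUp (hm : ∀ i, m i = ⌊x i⌋ ∨ m i = ⌈x i⌉) :
    (#(roundedUp x m) : ℤ) = ∑ i, m i - ∑ i, ⌊x i⌋ := by
  rw [← sum_sub_distrib, roundedUp, card_filter, Nat.cast_sum]
  refine sum_congr rfl fun i _ => ?_
  by_cases h : m i = ⌊x i⌋
  · simp [h]
  · simp [Int.eq_floor_add_one_of_ne_floor (hm i) h]

theorem sum_comp_abs_sub_eq {β : Type*} [AddCommGroup β] (φ : R → β)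
    (hm : ∀ i, m i = ⌊x i⌋ ∨ m i = ⌈x i⌉) :
    ∑ i, φ |x i - m i| = ∑ i, φ (Int.fract (x i)) +
      ∑ i ∈ roundedUp x m, (φ (1 - Int.fract (x i)) - φ (Int.fract (x i))) := by
  rw [roundedUp, sum_filter, ← sum_add_distrib]
  refine sum_congr rfl fun i _ => ?_
  by_cases h : m i = ⌊x i⌋
  · simp [h, Int.self_sub_floor, abs_of_nonneg (Int.fract_nonneg (x i))]
  · simp [h, Int.abs_sub_of_ne_floor (hm i) h]

end Feasible

theorem roundedUp_eq_filter_val_lt {N : ℕ} {x : Fin N → R}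
    (hx : Antitone fun i => Int.fract (x i)) {m s : Fin N → ℤ}
    (hm : ∀ i, m i = ⌊x i⌋ ∨ m i = ⌈x i⌉) {k : ℕ} (hk : #(roundedUp x m) = k)
    (hs : ∀ i, s i = if (i : ℕ) < k then ⌈x i⌉ else ⌊x i⌋) :
    roundedUp x s = ({i | (i : ℕ) < k} : Finset (Fin N)) := by
  ext i
  simp only [roundedUp, mem_filter, mem_univ, true_and, hs i]
  split_ifs with hi
  · -- the `k` entries `m` rounds up have positive fractional part, hence so do the first `k`
    have hpos := hx.lt_apply_of_lt_card (fun j hj => fract_pos_of_mem_roundedUp hm hj)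
      (hk.symm ▸ hi)
    simp [hi, (Int.ceil_eq_floor_add_one_iff_notMem _).mpr (Int.fract_ne_zero_iff.mp hpos.ne')]
  · simp [hi]

end Rounding

theorem stmt9_general (N : ℕ) (x : Fin N → ℝ) (hx : ∀ i, 0 < x i)
    (M : ℕ)
    (hsort : ∀ i j : Fin N, i ≤ j → x j - ⌊x j⌋ ≤ x i - ⌊x i⌋)
    (I : ℕ) (hI : (I : ℤ) = (M : ℤ) - ∑ i, ⌊x i⌋)
    (mstar : Fin N → ℕ)
    (hms : ∀ i : Fin N,
      mstar i = if (i : ℕ) < I then (⌈x i⌉).toNat else (⌊x i⌋).toNat)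
    (φ : ℝ → ℝ) (hφ : MonotoneOn φ (Set.Ici (0 : ℝ)))
    (m : Fin N → ℕ) (hm : ∑ i, m i = M)
    (hfeas : ∀ i, (m i : ℤ) = ⌊x i⌋ ∨ (m i : ℤ) = ⌈x i⌉) :
    ∑ i, φ |x i - (mstar i : ℝ)| ≤ ∑ i, φ |x i - (m i : ℝ)| := by
  have hanti : Antitone fun i => Int.fract (x i) := fun i j hij => hsort i j hij
  have hcard : #(roundedUp x fun i => (m i : ℤ)) = I := by
    have := card_roundedUp hfeas
    push_cast [← hm] at this hI
    omega
  have hmstar : ∀ i, (mstar i : ℤ) = if (i : ℕ) < I then ⌈x i⌉ else ⌊x i⌋ := fun i => by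
    have hfloor : 0 ≤ ⌊x i⌋ := Int.floor_nonneg.mpr (hx i).le
    rw [hms i]
    split_ifs
    · exact Int.toNat_of_nonneg (hfloor.trans (Int.floor_le_ceil _))
    · exact Int.toNat_of_nonneg hfloor
  have hfeas_star : ∀ i, (mstar i : ℤ) = ⌊x i⌋ ∨ (mstar i : ℤ) = ⌈x i⌉ := fun i => by
    rw [hmstar i]; split_ifs <;> simp
  have herr := sum_comp_abs_sub_eq φ hfeas
  have herr_star := sum_comp_abs_sub_eq φ hfeas_star
  simp only [Int.cast_natCast] at herr herr_star
  rw [herr, herr_star, roundedUp_eq_filter_val_lt hanti hfeas hcard hmstar, ← hcard]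
  exact add_le_add_right ((hanti.monotone_comp_one_sub_sub_comp hφ (fun i => Int.fract_nonneg _)
    fun i => (Int.fract_lt_one _).le).sum_filter_val_lt_card_le _) _

theorem stmt9 (N : ℕ) (hN : 1 ≤ N) (x : Fin N → ℝ) (hx : ∀ i, 0 < x i)
    (M : ℕ) (hsum : ∑ i, x i = (M : ℝ))
    (hsort : ∀ i j : Fin N, i ≤ j → x j - ⌊x j⌋ ≤ x i - ⌊x i⌋)
    (I : ℕ) (hI : (I : ℤ) = (M : ℤ) - ∑ i, ⌊x i⌋)
    (mstar : Fin N → ℕ)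
    (hms : ∀ i : Fin N,
      mstar i = if (i : ℕ) < I then (⌈x i⌉).toNat else (⌊x i⌋).toNat)
    (φ : ℝ → ℝ) (hφ : MonotoneOn φ (Set.Ici (0 : ℝ)))
    (m : Fin N → ℕ) (hm : ∑ i, m i = M)
    (hfeas : ∀ i, (m i : ℤ) = ⌊x i⌋ ∨ (m i : ℤ) = ⌈x i⌉) :
    ∑ i, φ |x i - (mstar i : ℝ)| ≤ ∑ i, φ |x i - (m i : ℝ)| :=
  stmt9_general N x hx M hsort I hI mstar hms φ hφ m hm hfeas
end

section
/- Any minimizer of ∑_i |x_i - m_i| over nonnegative integer vectors m with ∑ m_i = M rounds up exactly I = M - ∑ floor(x_i) components and rounds down the remaining N - I components, where each chosen m_i ∈ {floor(x_i), ceil(x_i)}; in particular the number of components rounded up is the same for every minimizer, provided no x_i is an integer. -/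
/-!
Moving one unit from a coordinate `p` with `m p > x p` to a coordinate `q` with `m q < x q`
changes `∑ |x i - m i|` by `(|A - 1| - A) + (|B - 1| - B)`, where `A = m p - x p > 0` and
`B = x q - m q > 0`; this is negative as soon as `A + B > 1`. Since `∑ (m i - x i) = 0`, a
coordinate with `m j < ⌊x j⌋` (resp. `m j > ⌈x j⌉`) always has such a partner, so a minimizer
rounds every coordinate to `⌊x i⌋` or `⌈x i⌉ = ⌊x i⌋ + 1`, and the number of coordinates rounded
up is `∑ (m i - ⌊x i⌋) = M - ∑ ⌊x i⌋`.
-/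

open Finset Function

variable {ι : Type*}

section Transfer

variable [DecidableEq ι]

def transfer (m : ι → ℕ) (p q : ι) : ι → ℕ :=
  update (update m p (m p - 1)) q (m q + 1)

variable {m : ι → ℕ} {p q : ι}

lemma transfer_apply_left (hpq : p ≠ q) : transfer m p q p = m p - 1 := by
  simp [transfer, hpq]

lemma transfer_apply_right : transfer m p q q = m q + 1 := by
  simp [transfer]

lemma transfer_apply_of_ne {i : ι} (hip : i ≠ p) (hiq : i ≠ q) : transfer m p q i = m i := by
  simp [transfer, hip, hiq]

variable [Fintype ι]

lemma sum_transfer (hpq : p ≠ q) (hp : 0 < m p) : ∑ i, transfer m p q i = ∑ i, m i := by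
  have key : ∀ f : ι → ℕ, ∑ i, f i = f p + f q + ∑ i ∈ (univ.erase p).erase q, f i := by
    intro f
    rw [add_assoc, add_sum_erase _ f (mem_erase.2 ⟨hpq.symm, mem_univ q⟩),
      add_sum_erase _ f (mem_univ p)]
  rw [key, key m, transfer_apply_left hpq, transfer_apply_right,
    sum_congr rfl fun i hi => transfer_apply_of_ne (ne_of_mem_erase (mem_of_mem_erase hi))
      (ne_of_mem_erase hi)]
  omega

lemma sum_abs_sub_transfer_lt (x : ι → ℝ) (hpq : p ≠ q) (hp : 0 < m p)
    (hA : x p < m p) (hB : (m q : ℝ) < x q) (hAB : 1 < (m p - x p) + (x q - m q)) :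
    ∑ i, |x i - transfer m p q i| < ∑ i, |x i - m i| := by
  rw [← sub_neg, ← sum_sub_distrib,
    Fintype.sum_eq_add p q hpq fun i hi => by rw [transfer_apply_of_ne hi.1 hi.2, sub_self],
    transfer_apply_left hpq, transfer_apply_right, Nat.cast_sub hp, Nat.cast_add, Nat.cast_one,
    abs_of_neg (sub_neg.2 hA), abs_of_pos (sub_pos.2 hB)]
  cases abs_cases (x p - (m p - 1 : ℝ)) <;> cases abs_cases (x q - (m q + 1 : ℝ)) <;> linarith

end Transfer

variable [Fintype ι]

def IsOptimalRounding (x : ι → ℝ) (m : ι → ℕ) : Prop :=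
  ∀ m' : ι → ℕ, ∑ i, m' i = ∑ i, m i → ∑ i, |x i - m i| ≤ ∑ i, |x i - m' i|

namespace IsOptimalRounding

variable {x : ι → ℝ} {m : ι → ℕ}

lemma floor_le (h : IsOptimalRounding x m) (hx : ∀ i, 0 ≤ x i)
    (hsum : ∑ i, x i = ∑ i, (m i : ℝ)) (j : ι) : ⌊x j⌋ ≤ m j := by
  classical
  by_contra! hj
  have hgap : 1 ≤ x j - m j := by
    have : ((m j : ℤ) : ℝ) + 1 ≤ ⌊x j⌋ := by exact_mod_cast hj
    push_cast at this
    linarith [Int.floor_le (x j)]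
  obtain ⟨p, -, hp⟩ := exists_pos_of_sum_zero_of_exists_nonzero (fun i => (m i : ℝ) - x i)
    (by rw [sum_sub_distrib, hsum, sub_self]) ⟨j, mem_univ j, by linarith⟩
  have hpj : p ≠ j := by rintro rfl; linarith
  have hmp : 0 < m p := by exact_mod_cast (hx p).trans_lt (sub_pos.1 hp)
  exact (sum_abs_sub_transfer_lt x hpj hmp (sub_pos.1 hp) (by linarith) (by linarith)).not_ge
    (h _ (sum_transfer hpj hmp))

lemma le_ceil (h : IsOptimalRounding x m) (hx : ∀ i, 0 ≤ x i)
    (hsum : ∑ i, x i = ∑ i, (m i : ℝ)) (j : ι) : (m j : ℤ) ≤ ⌈x j⌉ := by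
  classical
  by_contra! hj
  have hgap : 1 ≤ (m j : ℝ) - x j := by
    have : ((⌈x j⌉ : ℤ) : ℝ) + 1 ≤ ((m j : ℤ) : ℝ) := by exact_mod_cast hj
    push_cast at this
    linarith [Int.le_ceil (x j)]
  obtain ⟨q, -, hq⟩ := exists_pos_of_sum_zero_of_exists_nonzero (fun i => x i - m i)
    (by rw [sum_sub_distrib, hsum, sub_self]) ⟨j, mem_univ j, by linarith⟩
  have hjq : j ≠ q := by rintro rfl; linarith
  have hmj : 0 < m j := by exact_mod_cast (by linarith [hx j] : (0 : ℝ) < m j)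
  exact (sum_abs_sub_transfer_lt x hjq hmj (by linarith) (sub_pos.1 hq) (by linarith)).not_ge
    (h _ (sum_transfer hjq hmj))

end IsOptimalRounding

lemma card_filter_eq_add_one_eq_sum_sub {a b : ι → ℤ} (h : ∀ i, a i = b i ∨ a i = b i + 1) :
    ((univ.filter fun i => a i = b i + 1).card : ℤ) = ∑ i, (a i - b i) := by
  rw [natCast_card_filter]
  refine sum_congr rfl fun i _ => ?_
  rcases h i with hi | hi <;> simp [hi]

theorem stmt10_general (N : ℕ) (x : Fin N → ℝ) (hx : ∀ i, 0 < x i)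
    (M : ℕ) (hsum : ∑ i, x i = (M : ℝ))
    (hnint : ∀ i, x i ≠ (⌊x i⌋ : ℝ))
    (I : ℕ) (hI : (I : ℤ) = (M : ℤ) - ∑ i, ⌊x i⌋)
    (m : Fin N → ℕ) (hm : ∑ i, m i = M)
    (hmin : ∀ m' : Fin N → ℕ, ∑ i, m' i = M →
      ∑ i, |x i - (m i : ℝ)| ≤ ∑ i, |x i - (m' i : ℝ)|) :
    (∀ i, (m i : ℤ) = ⌊x i⌋ ∨ (m i : ℤ) = ⌈x i⌉) ∧
      (Finset.univ.filter (fun i : Fin N => (m i : ℤ) = ⌈x i⌉)).card = I := by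
  have hceil : ∀ i, ⌈x i⌉ = ⌊x i⌋ + 1 := fun i =>
    (Int.ceil_eq_floor_add_one_iff_notMem _).2 fun ⟨n, hn⟩ => hnint i (by simp [← hn])
  have hopt : IsOptimalRounding x m := fun m' hm' => hmin m' (hm' ▸ hm)
  have hsum' : ∑ i, x i = ∑ i, (m i : ℝ) := by rw [hsum, ← hm, Nat.cast_sum]
  have hround : ∀ i, (m i : ℤ) = ⌊x i⌋ ∨ (m i : ℤ) = ⌈x i⌉ := fun i => by
    have := hopt.floor_le (fun i => (hx i).le) hsum' i
    have := hopt.le_ceil (fun i => (hx i).le) hsum' i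
    have := hceil i
    omega
  refine ⟨hround, ?_⟩
  simp_rw [hceil] at hround ⊢
  rw [← Int.natCast_inj, card_filter_eq_add_one_eq_sum_sub hround, sum_sub_distrib, hI, ← hm,
    Nat.cast_sum]

theorem stmt10 (N : ℕ) (hN : 1 ≤ N) (x : Fin N → ℝ) (hx : ∀ i, 0 < x i)
    (M : ℕ) (hsum : ∑ i, x i = (M : ℝ))
    (hnint : ∀ i, x i ≠ (⌊x i⌋ : ℝ))
    (I : ℕ) (hI : (I : ℤ) = (M : ℤ) - ∑ i, ⌊x i⌋)
    (m : Fin N → ℕ) (hm : ∑ i, m i = M)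
    (hmin : ∀ m' : Fin N → ℕ, ∑ i, m' i = M →
      ∑ i, |x i - (m i : ℝ)| ≤ ∑ i, |x i - (m' i : ℝ)|) :
    (∀ i, (m i : ℤ) = ⌊x i⌋ ∨ (m i : ℤ) = ⌈x i⌉) ∧
      (Finset.univ.filter (fun i : Fin N => (m i : ℤ) = ⌈x i⌉)).card = I :=
  stmt10_general N x hx M hsum hnint I hI m hm hmin
end
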